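/- Suppose v_s has an exact median M_s, v_b has an exact median M_b, and M_b ≥ M_s. Then the fixed-price mechanism with trade price M_s satisfies E[W_{M_s}] ≥ (1/2)·E[max(v_s, v_b)] + (1/2)·E[v_s]. -/

import Mathlib

/-!
Write `p` for the seller's median. Pointwise,
`W_p = v_s + 1{v_s ≤ p} (v_b - p)⁺ + 1{p ≤ v_b} (p - v_s)⁺`, so by independence
`E W_p = E v_s + P(v_s ≤ p) E (v_b - p)⁺ + P(p ≤ v_b) E (p - v_s)⁺`. Both probabilities are at
least `1/2` (the second because `p ≤ M_b`), and `(v_b - v_s)⁺ ≤ (v_b - p)⁺ + (p - v_s)⁺`, so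
`E W_p ≥ E v_s + E (v_b - v_s)⁺ / 2 = (E max(v_s, v_b) + E v_s) / 2`.
-/

open MeasureTheory ProbabilityTheory Set

noncomputable def fixedPriceWelfare (p x y : ℝ) : ℝ := if x ≤ p ∧ p ≤ y then y else x

theorem fixedPriceWelfare_eq (p x y : ℝ) :
    fixedPriceWelfare p x y =
      x + (Iic p).indicator 1 x * (y - p)⁺ + (Ici p).indicator 1 y * (p - x)⁺ := by
  unfold fixedPriceWelfare
  by_cases hx : x ≤ p <;> by_cases hy : p ≤ y
  · simp only [hx, hy, and_self, ↓reduceIte, mem_Iic, indicator_of_mem, Pi.one_apply,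
      sub_nonneg.2, posPart_of_nonneg, one_mul, mem_Ici]
    ring
  · simp [hx, hy, (not_le.1 hy).le]
  · simp [hx, hy, (not_le.1 hx).le]
  · simp [hx, hy]

theorem posPart_add_le {α : Type*} [Lattice α] [AddCommGroup α] [IsOrderedAddMonoid α]
    (a b : α) : (a + b)⁺ ≤ a⁺ + b⁺ :=
  sup_le (add_le_add (le_posPart a) (le_posPart b))
    (add_nonneg (posPart_nonneg a) (posPart_nonneg b))

section

variable {Ω α : Type*} [MeasurableSpace Ω] [MeasurableSpace α] {μ : Measure Ω} {X : Ω → α}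
  {s : Set α}

theorem integral_indicator_one_comp (hX : AEMeasurable X μ) (hs : MeasurableSet s) :
    ∫ ω, s.indicator 1 (X ω) ∂μ = μ.real (X ⁻¹' s) := by
  simp_rw [← indicator_comp_right (g := (1 : α → ℝ)) X]
  rw [integral_indicator₀ (hX.nullMeasurableSet_preimage hs)]
  simp

theorem MeasureTheory.Integrable.indicator_one_comp_mul {f : Ω → ℝ} (hf : Integrable f μ)
    (hX : AEMeasurable X μ) (hs : MeasurableSet s) :
    Integrable (fun ω ↦ s.indicator 1 (X ω) * f ω) μ :=
  hf.bdd_mul (c := 1) ((measurable_one.indicator hs).comp_aemeasurable hX).aestronglyMeasurable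
    (.of_forall fun _ ↦ (norm_indicator_le_norm_self ..).trans_eq (by simp))

theorem ProbabilityTheory.IndepFun.integral_indicator_one_comp_mul {β : Type*}
    [MeasurableSpace β] {Y : Ω → β} {g : β → ℝ} (hXY : IndepFun X Y μ) (hX : AEMeasurable X μ)
    (hY : AEMeasurable Y μ) (hs : MeasurableSet s) (hg : Measurable g) :
    ∫ ω, s.indicator 1 (X ω) * g (Y ω) ∂μ = μ.real (X ⁻¹' s) * ∫ ω, g (Y ω) ∂μ := by
  rw [hXY.integral_fun_comp_mul_comp hX hY (measurable_one.indicator hs).aestronglyMeasurable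
    hg.aestronglyMeasurable, integral_indicator_one_comp hX hs]

end

section

variable {Ω : Type*} [MeasurableSpace Ω] {μ : Measure Ω} {X Y : Ω → ℝ}

theorem integral_max_eq_integral_add_integral_posPart_sub (hX : Integrable X μ)
    (hY : Integrable Y μ) :
    ∫ ω, max (X ω) (Y ω) ∂μ = μ[X] + ∫ ω, (Y ω - X ω)⁺ ∂μ := by
  have hYX : Integrable (fun ω ↦ (Y ω - X ω)⁺) μ := (hY.sub hX).pos_part
  rw [← integral_add hX hYX]
  congr with ω
  rw [max_comm]
  exact sup_eq_add_posPart_sub _ _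

variable [IsFiniteMeasure μ]

theorem integral_fixedPriceWelfare (hXY : IndepFun X Y μ) (hX : Integrable X μ)
    (hY : Integrable Y μ) (p : ℝ) :
    ∫ ω, fixedPriceWelfare p (X ω) (Y ω) ∂μ =
      μ[X] + μ.real {ω | X ω ≤ p} * ∫ ω, (Y ω - p)⁺ ∂μ
        + μ.real {ω | p ≤ Y ω} * ∫ ω, (p - X ω)⁺ ∂μ := by
  have hYp : Integrable (fun ω ↦ (Y ω - p)⁺) μ := (hY.sub (integrable_const p)).pos_part
  have hpX : Integrable (fun ω ↦ (p - X ω)⁺) μ := ((integrable_const p).sub hX).pos_part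
  have hbuyer_term := hYp.indicator_one_comp_mul hX.aemeasurable (measurableSet_Iic (a := p))
  have hseller_term := hpX.indicator_one_comp_mul hY.aemeasurable (measurableSet_Ici (a := p))
  simp_rw [fixedPriceWelfare_eq]
  rw [integral_add ?_ hseller_term, integral_add hX hbuyer_term,
    hXY.integral_indicator_one_comp_mul hX.aemeasurable hY.aemeasurable measurableSet_Iic
      (g := fun y ↦ (y - p)⁺) (by fun_prop),
    hXY.symm.integral_indicator_one_comp_mul hY.aemeasurable hX.aemeasurable measurableSet_Ici
      (g := fun x ↦ (p - x)⁺) (by fun_prop)]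
  · rfl
  · exact hX.add hbuyer_term

theorem half_integral_max_add_half_integral_le_integral_fixedPriceWelfare
    (hXY : IndepFun X Y μ) (hX : Integrable X μ) (hY : Integrable Y μ) {p : ℝ}
    (hXp : 1 / 2 ≤ μ.real {ω | X ω ≤ p}) (hpY : 1 / 2 ≤ μ.real {ω | p ≤ Y ω}) :
    1 / 2 * ∫ ω, max (X ω) (Y ω) ∂μ + 1 / 2 * μ[X] ≤
      ∫ ω, fixedPriceWelfare p (X ω) (Y ω) ∂μ := by
  have hYp : Integrable (fun ω ↦ (Y ω - p)⁺) μ := (hY.sub (integrable_const p)).pos_part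
  have hpX : Integrable (fun ω ↦ (p - X ω)⁺) μ := ((integrable_const p).sub hX).pos_part
  have hsplit : ∫ ω, (Y ω - X ω)⁺ ∂μ ≤ ∫ ω, (Y ω - p)⁺ ∂μ + ∫ ω, (p - X ω)⁺ ∂μ := by
    rw [← integral_add hYp hpX]
    refine integral_mono (hY.sub hX).pos_part (hYp.add hpX) fun ω ↦ ?_
    simpa using posPart_add_le (Y ω - p) (p - X ω)
  have hYp_nonneg : 0 ≤ ∫ ω, (Y ω - p)⁺ ∂μ := integral_nonneg fun _ ↦ posPart_nonneg _
  have hpX_nonneg : 0 ≤ ∫ ω, (p - X ω)⁺ ∂μ := integral_nonneg fun _ ↦ posPart_nonneg _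
  rw [integral_max_eq_integral_add_integral_posPart_sub hX hY,
    integral_fixedPriceWelfare hXY hX hY p]
  nlinarith

end

theorem median_mechanism_welfare_with_seller_expectation_general
    {Ω : Type*} [MeasurableSpace Ω] (μ : Measure Ω) [IsProbabilityMeasure μ]
    (vs vb : Ω → ℝ) (Ms Mb : ℝ)
    (hindep : IndepFun vs vb μ)
    (hs_int : Integrable vs μ) (hb_int : Integrable vb μ)
    (hmeds_le : μ {ω | vs ω ≤ Ms} = 1 / 2)
    (hmedb_ge : μ {ω | Mb ≤ vb ω} = 1 / 2)
    (hMbMs : Ms ≤ Mb) :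
    (1 / 2) * (∫ ω, max (vs ω) (vb ω) ∂μ) + (1 / 2) * (∫ ω, vs ω ∂μ)
      ≤ ∫ ω, (if vs ω ≤ Ms ∧ Ms ≤ vb ω then vb ω else vs ω) ∂μ := by
  have hseller : μ.real {ω | vs ω ≤ Ms} = 1 / 2 := by simp [measureReal_def, hmeds_le]
  have hbuyer : 1 / 2 ≤ μ.real {ω | Ms ≤ vb ω} :=
    calc (1 / 2 : ℝ) = μ.real {ω | Mb ≤ vb ω} := by simp [measureReal_def, hmedb_ge]
      _ ≤ μ.real {ω | Ms ≤ vb ω} := measureReal_mono fun ω hω ↦ hMbMs.trans hω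
  exact half_integral_max_add_half_integral_le_integral_fixedPriceWelfare hindep hs_int hb_int
    hseller.ge hbuyer

/-- When the buyer's median is at least the seller's median, the fixed-price mechanism
with trade price equal to the seller's median `Ms` has expected welfare at least
`(1/2)·E[max(v_s, v_b)] + (1/2)·E[v_s]`. -/
theorem median_mechanism_welfare_with_seller_expectation
    {Ω : Type*} [MeasurableSpace Ω] (μ : Measure Ω) [IsProbabilityMeasure μ]
    (vs vb : Ω → ℝ) (Ms Mb : ℝ)
    (hmeas_s : Measurable vs) (hmeas_b : Measurable vb)
    (hindep : IndepFun vs vb μ)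
    (hs_nonneg : ∀ ω, 0 ≤ vs ω) (hb_nonneg : ∀ ω, 0 ≤ vb ω)
    (hs_int : Integrable vs μ) (hb_int : Integrable vb μ)
    (hmeds_le : μ {ω | vs ω ≤ Ms} = 1 / 2)
    (hmeds_ge : μ {ω | Ms ≤ vs ω} = 1 / 2)
    (hmedb_le : μ {ω | vb ω ≤ Mb} = 1 / 2)
    (hmedb_ge : μ {ω | Mb ≤ vb ω} = 1 / 2)
    (hMbMs : Ms ≤ Mb) :
    (1 / 2) * (∫ ω, max (vs ω) (vb ω) ∂μ) + (1 / 2) * (∫ ω, vs ω ∂μ)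
      ≤ ∫ ω, (if vs ω ≤ Ms ∧ Ms ≤ vb ω then vb ω else vs ω) ∂μ :=
  median_mechanism_welfare_with_seller_expectation_general μ vs vb Ms Mb hindep hs_int hb_int
    hmeds_le hmedb_ge hMbMs
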